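/- In a flat folding of a closed polygonal loop in the line (a cyclic sequence of segments alternately going left and right, mapped to ℝ, forming a non-self-intersecting flat-folded loop when separated infinitesimally in a second dimension), the number of convex creases exceeds the number of reflex creases by exactly 2. -/

import Mathlib

open Finset

/-- Two integer intervals (given by their endpoints) properly interleave
(cross) each other. -/
def Interleaved (a b c d : ℤ) : Prop :=
  (min a b < min c d ∧ min c d < max a b ∧ max a b < max c d) ∨
  (min c d < min a b ∧ min a b < max c d ∧ max c d < max a b)

/-!
Sweep a vertical line across the folding from left to right, processing the creases in order of
position. The processed creases cut the loop into *runs*, maximal stretches of segments whose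
interior creases are all processed. Seen from the right, a run behaves like a single valley crease
joining its first and last segments: its total turn is `-sign (last layer - first layer)`, and the
layer intervals of distinct runs do not cross. Processing a valley starts a run of two segments and
processing a peak joins the two runs meeting there. Both properties survive because every segment
crossing the sweep line at the current crease has its layer outside the layer interval of that
crease: by non-penetration if it passes through the crease point, and by non-crossing if it ends
there (ties at a common point are broken as in `sweepKey`). When a single crease `w` is left, it is
a peak and the run through all other creases turns by `-sign (lay (w - 1) - lay w)`; adding the turn
`sign (lay w - lay (w - 1))` at `w` gives `±2`.
-/

open Filter Topology

lemma sum_Ico_one_add {M : Type*} [AddCommMonoid M] (f : ℕ → M) {a b : ℕ} (ha : 0 < a)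
    (hb : 0 < b) :
    ∑ k ∈ Ico 1 (a + b), f k = ∑ k ∈ Ico 1 a, f k + f a + ∑ k ∈ Ico 1 b, f (a + k) := by
  rw [← sum_Ico_consecutive f ha (Nat.le_add_right a b),
    sum_eq_sum_Ico_succ_bot (show a < a + b by omega), sum_Ico_add, add_comm 1 a, add_comm b a,
    add_assoc]

lemma ZMod.sum_eq_add_sum_Ico {n : ℕ} [NeZero n] {M : Type*} [AddCommMonoid M] (f : ZMod n → M)
    (w : ZMod n) : ∑ i, f i = f w + ∑ k ∈ Ico 1 n, f (w + k) := by
  have h := sum_eq_sum_Ico_succ_bot (NeZero.pos n) fun k : ℕ => f (w + k)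
  rw [Nat.cast_zero, add_zero, zero_add] at h
  rw [← h, ← range_eq_Ico, ← Equiv.sum_comp (Equiv.addLeft w)]
  refine sum_nbij' ZMod.val (fun k : ℕ => (k : ZMod n)) (fun a _ => mem_range.mpr a.val_lt)
    (fun _ _ => mem_univ _) (fun a _ => ZMod.natCast_zmod_val a)
    (fun a ha => ZMod.val_cast_of_lt (mem_range.mp ha)) fun a _ => ?_
  simp

lemma sum_sign_eq_card_sub_card {ι α : Type*} [Zero α] [Preorder α] [DecidableLT α]
    (s : Finset ι) (f : ι → α) : ∑ i ∈ s, (SignType.sign (f i) : ℤ) =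
      (#{i ∈ s | 0 < f i} : ℤ) - #{i ∈ s | f i < 0} := by
  simp only [sign_apply, apply_ite (fun x : SignType => (x : ℤ)), SignType.coe_one,
    SignType.coe_neg_one, SignType.coe_zero, sum_ite, sum_const, filter_filter,
    nsmul_eq_mul, mul_one, mul_neg]
  rw [mul_zero, add_zero, ← sub_eq_add_neg]
  congr 3
  exact filter_congr fun i _ => and_iff_right_of_imp fun h h' => lt_asymm h h'

lemma sign_int_eq_ite (x : ℤ) :
    (SignType.sign x : ℤ) = if 0 < x then 1 else if x < 0 then -1 else 0 := by
  rw [sign_apply]; split_ifs <;> rfl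

lemma interleaved_comm {a b c d : ℤ} : Interleaved a b c d ↔ Interleaved c d a b := by
  unfold Interleaved; omega

lemma not_interleaved_self_left (a c d : ℤ) : ¬ Interleaved a a c d := by
  unfold Interleaved; omega

lemma not_interleaved_self_right (a b c : ℤ) : ¬ Interleaved a b c c := by
  unfold Interleaved; omega

lemma not_interleaved_of_notMem_uIcc {a b c d : ℤ} (hc : c ∉ Set.uIcc a b)
    (hd : d ∉ Set.uIcc a b) : ¬ Interleaved a b c d := by
  rw [Set.mem_uIcc] at hc hd; unfold Interleaved; omega

lemma notMem_uIcc_of_not_interleaved {a b c d : ℤ} (h : ¬ Interleaved a b c d)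
    (hca : c ≠ a) (hcb : c ≠ b) (hda : d ≠ a) (hdb : d ≠ b) (hw : |b - a| ≤ |d - c|) :
    c ∉ Set.uIcc a b ∧ d ∉ Set.uIcc a b := by
  rw [Set.mem_uIcc, Set.mem_uIcc]; unfold Interleaved at h
  rcases abs_cases (b - a) with ⟨_, _⟩ | ⟨_, _⟩ <;>
    rcases abs_cases (d - c) with ⟨_, _⟩ | ⟨_, _⟩ <;> omega

lemma not_interleaved_of_chain {a u v b c d : ℤ} (hau : ¬ Interleaved a u c d)
    (hvb : ¬ Interleaved v b c d) (hc : c ∉ Set.uIcc u v) (hd : d ∉ Set.uIcc u v) :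
    ¬ Interleaved a b c d := by
  rw [Set.mem_uIcc] at hc hd; unfold Interleaved at *; omega

lemma sign_chain {a u v b : ℤ} (h : ¬ Interleaved a u v b) (ha : a ∉ Set.uIcc u v)
    (hb : b ∉ Set.uIcc u v) (hab : a ≠ b) (huv : u ≠ v) :
    -(SignType.sign (u - a) : ℤ) + SignType.sign (v - u) + -(SignType.sign (b - v) : ℤ) =
      -(SignType.sign (b - a) : ℤ) := by
  rw [Set.mem_uIcc] at ha hb; unfold Interleaved at h
  simp only [sign_int_eq_ite]; split_ifs <;> omega

namespace FoldedLoop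

section Folding

variable {n : ℕ} (p : ZMod n → ℝ) (lay : ZMod n → ℤ)

def span (k : ZMod n) : Set ℝ := Set.Ioo (min (p k) (p (k + 1))) (max (p k) (p (k + 1)))

def IsZigzag : Prop := ∀ i : ZMod n, (p (i + 1) - p i) * (p (i + 2) - p (i + 1)) < 0

def SeparatedLayers : Prop :=
  ∀ i j : ZMod n, i ≠ j → (span p i ∩ span p j).Nonempty → lay i ≠ lay j

def NoPenetration : Prop := ∀ i j : ZMod n, p i ∈ span p j →
  ¬ (min (lay (i - 1)) (lay i) < lay j ∧ lay j < max (lay (i - 1)) (lay i))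

def NoCrossing : Prop := ∀ i j : ZMod n, i ≠ j → p i = p j →
  0 < (p (i + 1) - p i) * (p (j + 1) - p j) →
  ¬ Interleaved (lay (i - 1)) (lay i) (lay (j - 1)) (lay j)

structure IsFlatFolding : Prop where
  zigzag : IsZigzag p
  separated : SeparatedLayers p lay
  noPenetration : NoPenetration p lay
  noCrossing : NoCrossing p lay

def IsPeak (i : ZMod n) : Prop := p (i + 1) < p i

noncomputable instance (i : ZMod n) : Decidable (IsPeak p i) :=
  inferInstanceAs (Decidable (p (i + 1) < p i))

noncomputable def turn (i : ZMod n) : ℤ :=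
  SignType.sign ((p i - p (i - 1)) * ((lay i : ℝ) - (lay (i - 1) : ℝ)))

-- The turn of a valley crease leading from segment `a` to segment `b`.
noncomputable def valleyTurn (a b : ZMod n) : ℤ := -SignType.sign (lay b - lay a)

-- The side of `p i` on which both segments at the crease `i` lie.
noncomputable def creaseSide (i : ZMod n) : Filter ℝ :=
  if IsPeak p i then 𝓝[<] (p i) else 𝓝[>] (p i)

instance (i : ZMod n) : (creaseSide p i).NeBot := by
  unfold creaseSide; split <;> infer_instance

-- Ties at one point: peaks, where segments end, come before valleys, where segments start;
-- peaks are taken innermost first and valleys outermost first.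
noncomputable def sweepKey (i : ZMod n) : ℝ ×ₗ ℕ ×ₗ ℤ :=
  toLex (p i, toLex (if IsPeak p i then 0 else 1,
    if IsPeak p i then |lay i - lay (i - 1)| else -|lay i - lay (i - 1)|))

def IsSweepPrefix (Q : Finset (ZMod n)) : Prop :=
  ∀ a ∈ Q, ∀ b ∉ Q, sweepKey p lay a ≤ sweepKey p lay b

def Joins (k a b : ZMod n) : Prop := (k = a ∧ b = a + 1) ∨ (k = b ∧ a = b + 1)

variable {p lay}

lemma SeparatedLayers.lay_ne {F : Filter ℝ} [F.NeBot] (h : SeparatedLayers p lay) {i j : ZMod n}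
    (hij : i ≠ j) (hi : span p i ∈ F) (hj : span p j ∈ F) : lay i ≠ lay j :=
  h i j hij (Filter.nonempty_of_mem (Filter.inter_mem hi hj))

namespace IsZigzag

lemma nontrivial (hz : IsZigzag p) : Nontrivial (ZMod n) := by
  rw [ZMod.nontrivial_iff]
  rintro rfl
  exact absurd (hz 0) (by simp [Subsingleton.elim (1 : ZMod 1) 0])

lemma succ_ne (hz : IsZigzag p) (i : ZMod n) : p (i + 1) ≠ p i := fun h => by simpa [h] using hz i

lemma pred_ne (hz : IsZigzag p) (i : ZMod n) : p (i - 1) ≠ p i := by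
  simpa [eq_comm] using hz.succ_ne (i - 1)

lemma isPeak_iff (hz : IsZigzag p) (i : ZMod n) : IsPeak p i ↔ p (i - 1) < p i := by
  have h := hz (i - 1)
  rw [sub_add_cancel, sub_add_eq_add_sub, add_sub_assoc, show (2 : ZMod n) - 1 = 1 by ring] at h
  unfold IsPeak
  rcases mul_neg_iff.mp h with ⟨_, _⟩ | ⟨_, _⟩ <;> constructor <;> intro <;> linarith

lemma lt_succ_and_lt_pred (hz : IsZigzag p) {i : ZMod n} (h : ¬ IsPeak p i) :
    p i < p (i + 1) ∧ p i < p (i - 1) :=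
  ⟨lt_of_le_of_ne (not_lt.mp h) (hz.succ_ne i).symm,
    lt_of_le_of_ne (not_lt.mp (mt (hz.isPeak_iff i).mpr h)) (hz.pred_ne i).symm⟩

lemma lt_of_isPeak_of_adj (hz : IsZigzag p) {a b : ZMod n} (ha : IsPeak p a)
    (hab : b = a + 1 ∨ a = b + 1) : p b < p a := by
  rcases hab with rfl | rfl
  · exact ha
  · simpa using (hz.isPeak_iff _).mp ha

lemma lt_of_not_isPeak_of_adj (hz : IsZigzag p) {a b : ZMod n} (ha : ¬ IsPeak p a)
    (hab : b = a + 1 ∨ a = b + 1) : p a < p b := by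
  rcases hab with rfl | rfl
  · exact (hz.lt_succ_and_lt_pred ha).1
  · simpa using (hz.lt_succ_and_lt_pred ha).2

lemma turn_of_isPeak (hz : IsZigzag p) {i : ZMod n} (h : IsPeak p i) :
    turn p lay i = SignType.sign (lay i - lay (i - 1)) := by
  have : 0 < p i - p (i - 1) := sub_pos.mpr ((hz.isPeak_iff i).mp h)
  rw [turn, sign_mul, sign_pos this, one_mul, ← Int.cast_sub, sign_intCast]

lemma turn_of_not_isPeak (hz : IsZigzag p) {i : ZMod n} (h : ¬ IsPeak p i) :
    turn p lay i = valleyTurn lay (i - 1) i := by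
  have : p i - p (i - 1) < 0 := sub_neg.mpr (hz.lt_succ_and_lt_pred h).2
  rw [turn, valleyTurn, sign_mul, sign_neg this, ← Int.cast_sub, sign_intCast]
  simp

lemma span_mem_creaseSide (hz : IsZigzag p) (i : ZMod n) : span p i ∈ creaseSide p i := by
  unfold creaseSide span
  by_cases h : IsPeak p i
  · rw [if_pos h]
    exact Ioo_mem_nhdsLT_of_mem ⟨min_lt_of_right_lt h, le_max_left _ _⟩
  · rw [if_neg h]
    exact Ioo_mem_nhdsGT_of_mem
      ⟨min_le_left _ _, lt_max_of_lt_right (hz.lt_succ_and_lt_pred h).1⟩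

lemma span_pred_mem_creaseSide (hz : IsZigzag p) (i : ZMod n) :
    span p (i - 1) ∈ creaseSide p i := by
  unfold creaseSide span
  rw [sub_add_cancel]
  by_cases h : IsPeak p i
  · rw [if_pos h]
    exact Ioo_mem_nhdsLT_of_mem ⟨min_lt_of_left_lt ((hz.isPeak_iff i).mp h), le_max_right _ _⟩
  · rw [if_neg h]
    exact Ioo_mem_nhdsGT_of_mem
      ⟨min_le_right _ _, lt_max_of_lt_left (hz.lt_succ_and_lt_pred h).2⟩

lemma pred_ne_self (hz : IsZigzag p) (i : ZMod n) : i - 1 ≠ i := by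
  have := hz.nontrivial
  simp

end IsZigzag

lemma IsFlatFolding.lay_pred_ne (hF : IsFlatFolding p lay) (i : ZMod n) : lay (i - 1) ≠ lay i :=
  hF.separated.lay_ne (hF.zigzag.pred_ne_self i) (hF.zigzag.span_pred_mem_creaseSide i)
    (hF.zigzag.span_mem_creaseSide i)

variable {i j : ZMod n}

lemma le_of_sweepKey_le (h : sweepKey p lay i ≤ sweepKey p lay j) : p i ≤ p j := by
  rw [sweepKey, sweepKey, Prod.Lex.toLex_le_toLex] at h
  rcases h with h | ⟨h, -⟩ <;> exact h.le

lemma isPeak_of_sweepKey_le (h : sweepKey p lay i ≤ sweepKey p lay j) (hij : p i = p j)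
    (hj : IsPeak p j) : IsPeak p i ∧ |lay i - lay (i - 1)| ≤ |lay j - lay (j - 1)| := by
  simp only [sweepKey, Prod.Lex.toLex_le_toLex, hij, lt_irrefl, false_or, true_and, hj,
    if_true] at h
  by_cases hi : IsPeak p i
  · simp only [hi, if_true] at h
    exact ⟨hi, by omega⟩
  · simp only [hi, if_false] at h
    omega

lemma not_isPeak_of_sweepKey_le (h : sweepKey p lay i ≤ sweepKey p lay j) (hij : p i = p j)
    (hi : ¬ IsPeak p i) : ¬ IsPeak p j ∧ |lay j - lay (j - 1)| ≤ |lay i - lay (i - 1)| := by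
  simp only [sweepKey, Prod.Lex.toLex_le_toLex, hij, lt_irrefl, false_or, true_and, hi,
    if_false] at h
  by_cases hj : IsPeak p j
  · simp only [hj, if_true] at h
    omega
  · simp only [hj, if_false] at h
    exact ⟨hj, by omega⟩

lemma creaseSide_eq (hij : p i = p j) (hpeak : IsPeak p i ↔ IsPeak p j) :
    creaseSide p i = creaseSide p j := by
  unfold creaseSide
  by_cases h : IsPeak p i
  · rw [if_pos h, if_pos (hpeak.mp h), hij]
  · rw [if_neg h, if_neg (mt hpeak.mpr h), hij]

lemma IsFlatFolding.notMem_uIcc_of_nested (hF : IsFlatFolding p lay) (hij : i ≠ j)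
    (hpij : p i = p j) (hpeak : IsPeak p i ↔ IsPeak p j)
    (hwidth : |lay i - lay (i - 1)| ≤ |lay j - lay (j - 1)|) :
    lay (j - 1) ∉ Set.uIcc (lay (i - 1)) (lay i) ∧
      lay j ∉ Set.uIcc (lay (i - 1)) (lay i) := by
  have hz := hF.zigzag
  have hside := creaseSide_eq hpij hpeak
  have hi₀ := hz.span_pred_mem_creaseSide i
  have hi₁ := hz.span_mem_creaseSide i
  have hj₀ := hside ▸ hz.span_pred_mem_creaseSide j
  have hj₁ := hside ▸ hz.span_mem_creaseSide j
  have hji : j ≠ i + 1 := fun h => hz.succ_ne i (h ▸ hpij.symm)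
  have hji' : j ≠ i - 1 := fun h => hz.pred_ne i (h ▸ hpij.symm)
  have hdir : 0 < (p (i + 1) - p i) * (p (j + 1) - p j) := by
    by_cases h : IsPeak p i
    · exact mul_pos_of_neg_of_neg (sub_neg.mpr h) (sub_neg.mpr (hpeak.mp h))
    · exact mul_pos (sub_pos.mpr (hz.lt_succ_and_lt_pred h).1)
        (sub_pos.mpr (hz.lt_succ_and_lt_pred (mt hpeak.mpr h)).1)
  refine notMem_uIcc_of_not_interleaved (hF.noCrossing i j hij hpij hdir) ?_ ?_ ?_ ?_ hwidth
  · exact hF.separated.lay_ne (by simpa using hij.symm) hj₀ hi₀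
  · exact hF.separated.lay_ne (fun h => hji (by simpa [sub_eq_iff_eq_add] using h)) hj₀ hi₁
  · exact hF.separated.lay_ne hji' hj₁ hi₀
  · exact hF.separated.lay_ne hij.symm hj₁ hi₁

lemma Joins.adj {k a b : ZMod n} (h : Joins k a b) : b = a + 1 ∨ a = b + 1 :=
  h.imp And.right And.right

lemma Joins.span_eq {k a b : ZMod n} (h : Joins k a b) :
    span p k = Set.Ioo (min (p a) (p b)) (max (p a) (p b)) := by
  rcases h with ⟨rfl, rfl⟩ | ⟨rfl, rfl⟩
  · rfl
  · rw [span, min_comm, max_comm]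

variable {Q : Finset (ZMod n)} {w : ZMod n}

lemma IsSweepPrefix.sweepKey_le (hQw : IsSweepPrefix p lay (insert w Q)) {b : ZMod n}
    (hb : b ∉ Q) : sweepKey p lay w ≤ sweepKey p lay b := by
  by_cases hbw : b = w
  · rw [hbw]
  · exact hQw w (mem_insert_self w Q) b (by simp [hbw, hb])

lemma IsSweepPrefix.mem_of_lt (hQw : IsSweepPrefix p lay (insert w Q)) {u : ZMod n}
    (hu : p u < p w) : u ∈ Q := by
  by_contra h
  exact (le_of_sweepKey_le (hQw.sweepKey_le h)).not_gt hu

lemma IsZigzag.span_mem_creaseSide_of_joins (hz : IsZigzag p) (hQ : IsSweepPrefix p lay Q)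
    (hQw : IsSweepPrefix p lay (insert w Q)) (hw : w ∉ Q) {k a b : ZMod n} (hk : Joins k a b)
    (ha : a ∈ Q) (hb : b ∉ Q) : span p k ∈ creaseSide p w := by
  have hpa := le_of_sweepKey_le (hQ a ha w hw)
  have hpb := le_of_sweepKey_le (hQw.sweepKey_le hb)
  rw [hk.span_eq]
  unfold creaseSide
  by_cases hpk : IsPeak p w
  · rw [if_pos hpk]
    refine Ioo_mem_nhdsLT_of_mem ⟨min_lt_of_left_lt (lt_of_le_of_ne hpa fun haw => ?_),
      le_max_of_le_right hpb⟩
    have hpka := (isPeak_of_sweepKey_le (hQ a ha w hw) haw hpk).1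
    exact (hz.lt_of_isPeak_of_adj hpka hk.adj).not_ge (haw ▸ hpb)
  · rw [if_neg hpk]
    refine Ioo_mem_nhdsGT_of_mem ⟨min_le_of_left_le hpa,
      lt_max_of_lt_right (lt_of_le_of_ne hpb fun hwb => ?_)⟩
    have hpkb := (not_isPeak_of_sweepKey_le (hQw.sweepKey_le hb) hwb hpk).1
    exact (hz.lt_of_not_isPeak_of_adj hpkb (hk.adj.symm)).not_ge (hwb ▸ hpa)

lemma IsFlatFolding.lay_notMem_uIcc_of_joins_of_eq_right (hF : IsFlatFolding p lay)
    (hQw : IsSweepPrefix p lay (insert w Q)) {k a b : ZMod n} (hk : Joins k a b) (hb : b ∉ Q)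
    (hab : p a < p b) (hwb : p w = p b) (hkw : k ≠ w) (hkw' : k ≠ w - 1) :
    lay k ∉ Set.uIcc (lay (w - 1)) (lay w) := by
  have hbpk : IsPeak p b := by
    by_contra h
    exact (hF.zigzag.lt_of_not_isPeak_of_adj h hk.adj.symm).not_gt hab
  obtain ⟨hwpk, hwidth⟩ := isPeak_of_sweepKey_le (hQw.sweepKey_le hb) hwb hbpk
  have hwb' : w ≠ b := by
    rintro rfl
    rcases hk with ⟨rfl, rfl⟩ | ⟨rfl, -⟩
    exacts [hkw' (by simp), hkw rfl]
  have hnest := hF.notMem_uIcc_of_nested hwb' hwb ⟨fun _ => hbpk, fun _ => hwpk⟩ hwidth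
  rcases hk with ⟨rfl, rfl⟩ | ⟨rfl, -⟩
  · simpa using hnest.1
  · exact hnest.2

lemma IsFlatFolding.lay_notMem_uIcc_of_joins_of_eq_left (hF : IsFlatFolding p lay)
    (hQ : IsSweepPrefix p lay Q) (hw : w ∉ Q) {k a b : ZMod n} (hk : Joins k a b) (ha : a ∈ Q)
    (hab : p a < p b) (haw : p a = p w) : lay k ∉ Set.uIcc (lay (w - 1)) (lay w) := by
  have hapk : ¬ IsPeak p a := fun h => (hF.zigzag.lt_of_isPeak_of_adj h hk.adj).not_gt hab
  obtain ⟨hwpk, hwidth⟩ := not_isPeak_of_sweepKey_le (hQ a ha w hw) haw hapk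
  have hnest := hF.notMem_uIcc_of_nested (ne_of_mem_of_not_mem ha hw).symm haw.symm
    ⟨fun h => absurd h hwpk, fun h => absurd h hapk⟩ hwidth
  rcases hk with ⟨rfl, -⟩ | ⟨rfl, rfl⟩
  · exact hnest.2
  · simpa using hnest.1

lemma IsFlatFolding.lay_notMem_uIcc_of_joins (hF : IsFlatFolding p lay)
    (hQ : IsSweepPrefix p lay Q) (hQw : IsSweepPrefix p lay (insert w Q)) (hw : w ∉ Q)
    {k a b : ZMod n} (hk : Joins k a b) (ha : a ∈ Q) (hb : b ∉ Q) (hkw : k ≠ w)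
    (hkw' : k ≠ w - 1) : lay k ∉ Set.uIcc (lay (w - 1)) (lay w) := by
  have hz := hF.zigzag
  have hpa := le_of_sweepKey_le (hQ a ha w hw)
  have hpb := le_of_sweepKey_le (hQw.sweepKey_le hb)
  have hab : p a < p b := by
    refine lt_of_le_of_ne (hpa.trans hpb) ?_
    rcases hk.adj with rfl | rfl
    exacts [(hz.succ_ne a).symm, hz.succ_ne b]
  rcases hpb.eq_or_lt with hwb | hwb
  · exact hF.lay_notMem_uIcc_of_joins_of_eq_right hQw hk hb hab hwb hkw hkw'
  rcases hpa.eq_or_lt with haw | haw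
  · exact hF.lay_notMem_uIcc_of_joins_of_eq_left hQ hw hk ha hab haw
  have hspan := hz.span_mem_creaseSide_of_joins hQ hQw hw hk ha hb
  have h₀ := hF.separated.lay_ne hkw' hspan (hz.span_pred_mem_creaseSide w)
  have h₁ := hF.separated.lay_ne hkw hspan (hz.span_mem_creaseSide w)
  have := hF.noPenetration w k (hk.span_eq ▸ ⟨min_lt_of_left_lt haw, lt_max_of_lt_right hwb⟩)
  rw [Set.mem_uIcc]
  omega

end Folding

section Runs

variable {n : ℕ} [NeZero n] {Q : Finset (ZMod n)} {u v w : ZMod n}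

lemma exists_add_notMem (hv : v ∉ Q) : ∃ m : ℕ, 0 < m ∧ v + m ∉ Q :=
  ⟨n, NeZero.pos n, by simpa using hv⟩

-- For `v ∉ Q`, the run starting at `v` consists of the segments `v, …, v + runLength Q v - 1`.
open Classical in
noncomputable def runLength (Q : Finset (ZMod n)) (v : ZMod n) : ℕ :=
  if h : ∃ m : ℕ, 0 < m ∧ v + m ∉ Q then Nat.find h else 0

noncomputable def runEnd (Q : Finset (ZMod n)) (v : ZMod n) : ZMod n := v + runLength Q v

lemma runLength_pos (hv : v ∉ Q) : 0 < runLength Q v := by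
  classical
  rw [runLength, dif_pos (exists_add_notMem hv)]
  exact (Nat.find_spec (exists_add_notMem hv)).1

lemma runEnd_notMem (hv : v ∉ Q) : runEnd Q v ∉ Q := by
  classical
  rw [runEnd, runLength, dif_pos (exists_add_notMem hv)]
  exact (Nat.find_spec (exists_add_notMem hv)).2

lemma add_mem_of_lt_runLength (hv : v ∉ Q) {k : ℕ} (hk₀ : 0 < k) (hk : k < runLength Q v) :
    v + k ∈ Q := by
  classical
  rw [runLength, dif_pos (exists_add_notMem hv)] at hk
  by_contra h
  exact Nat.find_min (exists_add_notMem hv) hk ⟨hk₀, h⟩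

lemma runLength_le (hv : v ∉ Q) : runLength Q v ≤ n := by
  classical
  rw [runLength, dif_pos (exists_add_notMem hv)]
  exact Nat.find_min' _ ⟨NeZero.pos n, by simpa using hv⟩

lemma runLength_eq (hv : v ∉ Q) {m : ℕ} (hm : 0 < m) (hout : v + m ∉ Q)
    (hin : ∀ k : ℕ, 0 < k → k < m → v + k ∈ Q) : runLength Q v = m := by
  rcases lt_trichotomy (runLength Q v) m with h | h | h
  · exact absurd (hin _ (runLength_pos hv) h) (runEnd_notMem hv)
  · exact h
  · exact absurd (add_mem_of_lt_runLength hv hm h) hout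

lemma runLength_eq_one (hv : v ∉ Q) (h : v + 1 ∉ Q) : runLength Q v = 1 :=
  runLength_eq hv one_pos (by simpa using h) fun _ _ _ => by omega

lemma add_one_mem_of_one_lt_runLength (hv : v ∉ Q) (h : 1 < runLength Q v) : v + 1 ∈ Q := by
  simpa using add_mem_of_lt_runLength hv one_pos h

lemma runEnd_sub_one_mem (hv : v ∉ Q) (h : 1 < runLength Q v) : runEnd Q v - 1 ∈ Q := by
  have := add_mem_of_lt_runLength hv (k := runLength Q v - 1) (by omega) (by omega)
  rwa [Nat.cast_sub h.le, Nat.cast_one, ← add_sub_assoc] at this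

lemma runEnd_ne_self (hv : v ∉ Q) (hu : u ∉ Q) (huv : u ≠ v) : runEnd Q v ≠ v := by
  intro h
  have hn : runLength Q v = n := by
    have hdvd := (ZMod.natCast_eq_zero_iff _ n).mp (by simpa [runEnd] using h)
    exact le_antisymm (runLength_le hv) (Nat.le_of_dvd (runLength_pos hv) hdvd)
  apply hu
  have hval : 0 < (u - v).val := ZMod.val_pos.mpr (sub_ne_zero.mpr huv)
  simpa using add_mem_of_lt_runLength hv hval (hn.symm ▸ ZMod.val_lt (u - v))

lemma runEnd_ne_of_runLength_lt (hu : u ∉ Q) (hv : v ∉ Q)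
    (hlt : runLength Q u < runLength Q v) : runEnd Q u ≠ runEnd Q v := by
  intro h
  have hu' : u = v + ((runLength Q v - runLength Q u : ℕ) : ZMod n) := by
    rw [Nat.cast_sub hlt.le]
    unfold runEnd at h
    linear_combination h
  have := runLength_pos hu
  exact hu (hu' ▸ add_mem_of_lt_runLength hv (by omega) (by omega))

lemma eq_of_runEnd_eq (hu : u ∉ Q) (hv : v ∉ Q) (h : runEnd Q u = runEnd Q v) : u = v := by
  rcases lt_trichotomy (runLength Q u) (runLength Q v) with hlt | heq | hgt
  · exact absurd h (runEnd_ne_of_runLength_lt hu hv hlt)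
  · simpa [runEnd, heq] using h
  · exact absurd h.symm (runEnd_ne_of_runLength_lt hv hu hgt)

lemma exists_runEnd_eq (hw : w ∉ Q) : ∃ v ∉ Q, runEnd Q v = w := by
  have hsurj := Finset.surjOn_of_injOn_of_card_le (s := univ \ Q) (t := univ \ Q) (runEnd Q)
    (fun v hv => by simpa using runEnd_notMem (by simpa using hv))
    (fun u hu v hv => eq_of_runEnd_eq (by simpa using hu) (by simpa using hv)) le_rfl
  obtain ⟨v, hv, hvw⟩ := hsurj (by simpa using hw)
  exact ⟨v, by simpa using hv, hvw⟩

lemma runLength_insert_of_runEnd_ne (hv : v ∉ Q) (hvw : v ≠ w) (h : runEnd Q v ≠ w) :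
    runLength (insert w Q) v = runLength Q v :=
  runLength_eq (by simp [hv, hvw]) (runLength_pos hv) (by simpa using ⟨h, runEnd_notMem hv⟩)
    fun _ hk₀ hk => mem_insert_of_mem (add_mem_of_lt_runLength hv hk₀ hk)

lemma runLength_insert_of_runEnd_eq (hv : v ∉ Q) (hvw : v ≠ w) (hw : w ∉ Q)
    (h : runEnd Q v = w) : runLength (insert w Q) v = runLength Q v + runLength Q w := by
  have hend : v + ((runLength Q v + runLength Q w : ℕ) : ZMod n) = runEnd Q w := by
    rw [← h, runEnd, runEnd]; push_cast; ring
  refine runLength_eq (by simp [hv, hvw]) (by have := runLength_pos hv; omega) ?_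
    fun k hk₀ hk => ?_
  · rw [hend]
    simpa using ⟨runEnd_ne_self hw hv hvw, runEnd_notMem hw⟩
  · rcases lt_trichotomy k (runLength Q v) with hlt | rfl | hgt
    · exact mem_insert_of_mem (add_mem_of_lt_runLength hv hk₀ hlt)
    · simp [← h, runEnd]
    · have hk' : v + (k : ZMod n) = w + ((k - runLength Q v : ℕ) : ZMod n) := by
        rw [← h, runEnd, Nat.cast_sub hgt.le]; ring
      rw [hk']
      exact mem_insert_of_mem (add_mem_of_lt_runLength hw (by omega) (by omega))

lemma runEnd_insert_of_runEnd_ne (hv : v ∉ Q) (hvw : v ≠ w) (h : runEnd Q v ≠ w) :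
    runEnd (insert w Q) v = runEnd Q v := by
  rw [runEnd, runLength_insert_of_runEnd_ne hv hvw h, runEnd]

lemma runEnd_insert_of_runEnd_eq (hv : v ∉ Q) (hvw : v ≠ w) (hw : w ∉ Q)
    (h : runEnd Q v = w) : runEnd (insert w Q) v = runEnd Q w := by
  rw [runEnd, runLength_insert_of_runEnd_eq hv hvw hw h, ← h, runEnd, runEnd]
  push_cast
  ring

lemma sum_Ico_runLength_insert {M : Type*} [AddCommMonoid M] (f : ZMod n → M) (hv : v ∉ Q)
    (hvw : v ≠ w) (hw : w ∉ Q) (h : runEnd Q v = w) :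
    ∑ k ∈ Ico 1 (runLength (insert w Q) v), f (v + k) =
      ∑ k ∈ Ico 1 (runLength Q v), f (v + k) + f w +
        ∑ k ∈ Ico 1 (runLength Q w), f (w + k) := by
  rw [runLength_insert_of_runEnd_eq hv hvw hw h,
    sum_Ico_one_add _ (runLength_pos hv) (runLength_pos hw), ← runEnd, h]
  refine congrArg _ (sum_congr rfl fun k _ => ?_)
  rw [← h, runEnd]
  push_cast
  ring_nf

lemma runLength_empty (v : ZMod n) : runLength ∅ v = 1 :=
  runLength_eq_one (notMem_empty v) (notMem_empty _)

end Runs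

section Sweep

variable {n : ℕ} [NeZero n] {p : ZMod n → ℝ} {lay : ZMod n → ℤ} {Q : Finset (ZMod n)}
  {v w : ZMod n}

variable (p lay Q) in
structure SweepInvariant : Prop where
  isSweepPrefix : IsSweepPrefix p lay Q
  sum_turn : ∀ v ∉ Q, ∑ k ∈ Ico 1 (runLength Q v), turn p lay (v + k) =
    valleyTurn lay v (runEnd Q v - 1)
  not_interleaved : ∀ u ∉ Q, ∀ v ∉ Q, u ≠ v →
    ¬ Interleaved (lay u) (lay (runEnd Q u - 1)) (lay v) (lay (runEnd Q v - 1))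

lemma SweepInvariant.insert_of_runEnd_eq (hI : SweepInvariant p lay Q)
    (hQw : IsSweepPrefix p lay (insert w Q)) (hw : w ∉ Q) (hv : v ∉ Q) (hvw : v ≠ w)
    (hend : runEnd Q v = w)
    (hturn : valleyTurn lay v (w - 1) + turn p lay w + valleyTurn lay w (runEnd Q w - 1) =
      valleyTurn lay v (runEnd Q w - 1))
    (hout : ∀ u ∉ Q, u ≠ v → u ≠ w → 1 < runLength Q u →
      lay u ∉ Set.uIcc (lay (w - 1)) (lay w) ∧
        lay (runEnd Q u - 1) ∉ Set.uIcc (lay (w - 1)) (lay w)) :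
    SweepInvariant p lay (insert w Q) := by
  have hmem : ∀ {u}, u ∉ insert w Q → u ∉ Q ∧ u ≠ w := fun hu => by
    simpa [and_comm] using hu
  have hne : ∀ {u}, u ∉ insert w Q → u ≠ v → runEnd Q u ≠ w := fun hu huv h =>
    huv (eq_of_runEnd_eq (hmem hu).1 hv (h.trans hend.symm))
  have hend_v := runEnd_insert_of_runEnd_eq hv hvw hw hend
  have hend_u : ∀ {u}, u ∉ insert w Q → u ≠ v → runEnd (insert w Q) u = runEnd Q u :=
    fun hu huv => runEnd_insert_of_runEnd_ne (hmem hu).1 (hmem hu).2 (hne hu huv)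
  have hcross : ∀ {u}, u ∉ insert w Q → u ≠ v →
      ¬ Interleaved (lay v) (lay (runEnd Q w - 1)) (lay u) (lay (runEnd Q u - 1)) := by
    intro u hu huv
    obtain ⟨huQ, huw⟩ := hmem hu
    rcases Nat.lt_or_ge 1 (runLength Q u) with h | h
    · have hvu := hI.not_interleaved v hv u huQ huv.symm
      rw [hend] at hvu
      exact not_interleaved_of_chain hvu (hI.not_interleaved w hw u huQ huw.symm)
        (hout u huQ huv huw h).1 (hout u huQ huv huw h).2
    · have h₁ : runLength Q u = 1 := le_antisymm h (runLength_pos huQ)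
      simpa [runEnd, h₁] using not_interleaved_self_right (lay v) (lay (runEnd Q w - 1)) (lay u)
  refine ⟨hQw, fun u hu => ?_, fun u hu u' hu' huu' => ?_⟩
  · by_cases huv : u = v
    · rw [huv, hend_v, sum_Ico_runLength_insert _ hv hvw hw hend, hI.sum_turn v hv, hend,
        hI.sum_turn w hw, hturn]
    · rw [runLength_insert_of_runEnd_ne (hmem hu).1 (hmem hu).2 (hne hu huv), hend_u hu huv]
      exact hI.sum_turn u (hmem hu).1
  · by_cases huv : u = v
    · rw [huv, hend_v, hend_u hu' (huv ▸ huu').symm]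
      exact hcross hu' (huv ▸ huu').symm
    by_cases hu'v : u' = v
    · rw [hu'v, hend_v, hend_u hu huv, interleaved_comm]
      exact hcross hu huv
    rw [hend_u hu huv, hend_u hu' hu'v]
    exact hI.not_interleaved u (hmem hu).1 u' (hmem hu').1 huu'

lemma IsSweepPrefix.exists_insert (hQ : IsSweepPrefix p lay Q) (hne : (univ \ Q).Nonempty) :
    ∃ w ∉ Q, IsSweepPrefix p lay (insert w Q) := by
  obtain ⟨w, hw, hmin⟩ := exists_min_image (univ \ Q) (sweepKey p lay) hne
  refine ⟨w, (mem_sdiff.mp hw).2, fun a ha b hb => ?_⟩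
  rw [mem_insert, not_or] at hb
  rcases mem_insert.mp ha with rfl | ha
  · exact hmin b (by simp [hb.2])
  · exact hQ a ha b hb.2

lemma IsFlatFolding.runEnds_notMem_uIcc (hF : IsFlatFolding p lay) (hQ : IsSweepPrefix p lay Q)
    (hQw : IsSweepPrefix p lay (insert w Q)) (hw : w ∉ Q) (hv : v ∉ Q) (hend : runEnd Q v = w)
    {u : ZMod n} (hu : u ∉ Q) (huv : u ≠ v) (huw : u ≠ w) (hlen : 1 < runLength Q u) :
    lay u ∉ Set.uIcc (lay (w - 1)) (lay w) ∧
      lay (runEnd Q u - 1) ∉ Set.uIcc (lay (w - 1)) (lay w) := by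
  have hu₁ := add_one_mem_of_one_lt_runLength hu hlen
  have he₁ := runEnd_sub_one_mem hu hlen
  refine ⟨hF.lay_notMem_uIcc_of_joins hQ hQw hw (Or.inr ⟨rfl, rfl⟩) hu₁ hu huw ?_,
    hF.lay_notMem_uIcc_of_joins hQ hQw hw (Or.inl ⟨rfl, (sub_add_cancel _ _).symm⟩) he₁
      (runEnd_notMem hu) (ne_of_mem_of_not_mem he₁ hw) fun h => ?_⟩
  · rintro rfl
    exact hw (by simpa using hu₁)
  · exact huv (eq_of_runEnd_eq hu hv (by rw [sub_left_inj.mp h, hend]))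

lemma IsZigzag.turn_merge_of_not_isPeak (hz : IsZigzag p) (hQ : IsSweepPrefix p lay Q)
    (hw : w ∉ Q) (hv : v ∉ Q) (hend : runEnd Q v = w) (hpk : ¬ IsPeak p w) :
    valleyTurn lay v (w - 1) + turn p lay w + valleyTurn lay w (runEnd Q w - 1) =
      valleyTurn lay v (runEnd Q w - 1) := by
  have hnot : ∀ {u}, p w < p u → u ∉ Q := fun hlt hu =>
    (le_of_sweepKey_le (hQ _ hu w hw)).not_gt hlt
  have hw₀ : w - 1 ∉ Q := hnot (hz.lt_succ_and_lt_pred hpk).2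
  have hw₁ : runEnd Q w = w + 1 := by
    rw [runEnd, runLength_eq_one hw (hnot (hz.lt_succ_and_lt_pred hpk).1), Nat.cast_one]
  have hvw : v = w - 1 := eq_of_runEnd_eq hv hw₀ <| by
    rw [hend, runEnd, runLength_eq_one hw₀ (by simpa using hw), Nat.cast_one, sub_add_cancel]
  rw [hw₁, hvw, add_sub_cancel_right, hz.turn_of_not_isPeak hpk]
  simp [valleyTurn]

lemma IsFlatFolding.turn_merge_of_isPeak (hF : IsFlatFolding p lay) (hI : SweepInvariant p lay Q)
    (hQw : IsSweepPrefix p lay (insert w Q)) (hw : w ∉ Q) (hv : v ∉ Q) (hvw : v ≠ w)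
    (hend : runEnd Q v = w) (hpk : IsPeak p w) :
    valleyTurn lay v (w - 1) + turn p lay w + valleyTurn lay w (runEnd Q w - 1) =
      valleyTurn lay v (runEnd Q w - 1) := by
  have hz := hF.zigzag
  have hQ := hI.isSweepPrefix
  have hw₀ : w - 1 ∈ Q := hQw.mem_of_lt ((hz.isPeak_iff w).mp hpk)
  have hw₁ : w + 1 ∈ Q := hQw.mem_of_lt hpk
  have hv₁ : v + 1 ∈ Q := by
    refine add_one_mem_of_one_lt_runLength hv (lt_of_le_of_ne (runLength_pos hv) fun h => hv ?_)
    have h₁ : v + 1 = w := by simpa [runEnd, ← h] using hend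
    rwa [eq_sub_of_add_eq h₁]
  have he₀ : runEnd Q w - 1 ∈ Q := runEnd_sub_one_mem hw <|
    lt_of_le_of_ne (runLength_pos hw) fun h =>
      runEnd_notMem hw (by simpa [runEnd, ← h] using hw₁)
  have hjv : Joins v (v + 1) v := Or.inr ⟨rfl, rfl⟩
  have hje : Joins (runEnd Q w - 1) (runEnd Q w - 1) (runEnd Q w) :=
    Or.inl ⟨rfl, (sub_add_cancel _ _).symm⟩
  have hvw₀ : v ≠ w - 1 := (ne_of_mem_of_not_mem hw₀ hv).symm
  have hew : runEnd Q w - 1 ≠ w - 1 := fun h => runEnd_ne_self hw hv hvw (sub_left_inj.mp h)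
  have hout_v := hF.lay_notMem_uIcc_of_joins hQ hQw hw hjv hv₁ hv hvw hvw₀
  have hout_e := hF.lay_notMem_uIcc_of_joins hQ hQw hw hje he₀ (runEnd_notMem hw)
    (ne_of_mem_of_not_mem he₀ hw) hew
  have hve : lay v ≠ lay (runEnd Q w - 1) := hF.separated.lay_ne
    (fun h => runEnd_notMem hw (by rwa [← sub_add_cancel (runEnd Q w) 1, ← h]))
    (hz.span_mem_creaseSide_of_joins hQ hQw hw hjv hv₁ hv)
    (hz.span_mem_creaseSide_of_joins hQ hQw hw hje he₀ (runEnd_notMem hw))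
  have hnest := hI.not_interleaved v hv w hw hvw
  rw [hend] at hnest
  rw [hz.turn_of_isPeak hpk]
  exact sign_chain hnest hout_v hout_e hve (hF.lay_pred_ne w)

lemma SweepInvariant.exists_insert (hF : IsFlatFolding p lay) (hI : SweepInvariant p lay Q)
    (hcard : 1 < #(univ \ Q)) : ∃ w ∉ Q, SweepInvariant p lay (insert w Q) := by
  obtain ⟨w, hw, hQw⟩ := hI.isSweepPrefix.exists_insert (card_pos.mp (by omega))
  obtain ⟨u, hu, huw⟩ := exists_mem_ne hcard w
  obtain ⟨v, hv, hend⟩ := exists_runEnd_eq hw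
  have hvw : v ≠ w := fun h => runEnd_ne_self hw (mem_sdiff.mp hu).2 huw (h ▸ hend)
  refine ⟨w, hw, hI.insert_of_runEnd_eq hQw hw hv hvw hend ?_
    fun u hu huv huw => hF.runEnds_notMem_uIcc hI.isSweepPrefix hQw hw hv hend hu huv huw⟩
  by_cases hpk : IsPeak p w
  · exact hF.turn_merge_of_isPeak hI hQw hw hv hvw hend hpk
  · exact hF.zigzag.turn_merge_of_not_isPeak hI.isSweepPrefix hw hv hend hpk

lemma sweepInvariant_empty : SweepInvariant p lay ∅ where
  isSweepPrefix _ ha := absurd ha (notMem_empty _)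
  sum_turn v _ := by simp [runEnd, runLength_empty, valleyTurn]
  not_interleaved u _ v _ _ := by
    simpa [runEnd, runLength_empty] using not_interleaved_self_left (lay u) (lay v) (lay v)

lemma SweepInvariant.sum_turn_of_sdiff_eq_singleton (hz : IsZigzag p)
    (hI : SweepInvariant p lay Q) (hQ : univ \ Q = {w}) :
    ∑ i, turn p lay i = 2 * (SignType.sign (lay w - lay (w - 1)) : ℤ) := by
  have hmem : ∀ u, u ∈ Q ↔ u ≠ w := fun u =>
    Iff.not_right (by simpa using Finset.ext_iff.mp hQ u)
  have hw : w ∉ Q := by simp [hmem]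
  have hlen : runLength Q w = n := runLength_eq hw (NeZero.pos n) (by simpa using hw)
    fun k hk₀ hk => (hmem _).mpr fun h => hk₀.ne' <|
      Nat.eq_zero_of_dvd_of_lt ((ZMod.natCast_eq_zero_iff k n).mp (by simpa using h)) hk
  have hpk : IsPeak p w := (hz.isPeak_iff w).mpr <| lt_of_le_of_ne
    (le_of_sweepKey_le (hI.isSweepPrefix _ ((hmem _).mpr (hz.pred_ne_self w)) w hw)) (hz.pred_ne w)
  have hsum := hI.sum_turn w hw
  rw [runEnd, hlen, ZMod.natCast_self, add_zero] at hsum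
  rw [ZMod.sum_eq_add_sum_Ico _ w, hsum, valleyTurn, hz.turn_of_isPeak hpk,
    ← neg_sub (lay w), Left.sign_neg, SignType.coe_neg]
  ring

end Sweep

variable {n : ℕ} [NeZero n] {p : ZMod n → ℝ} {lay : ZMod n → ℤ}

theorem IsFlatFolding.sum_turn_eq_two_or_eq_neg_two (hF : IsFlatFolding p lay)
    {Q : Finset (ZMod n)} (hI : SweepInvariant p lay Q) (hne : (univ \ Q).Nonempty) :
    ∑ i, turn p lay i = 2 ∨ ∑ i, turn p lay i = -2 := by
  rcases Nat.lt_or_ge 1 #(univ \ Q) with h | h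
  swap
  · obtain ⟨w, hw⟩ := card_eq_one.mp (le_antisymm h (card_pos.mpr hne))
    rw [hI.sum_turn_of_sdiff_eq_singleton hF.zigzag hw]
    rcases (sub_ne_zero.mpr (hF.lay_pred_ne w).symm).lt_or_gt with h | h
    · simp [sign_neg h]
    · simp [sign_pos h]
  · obtain ⟨w, hw, hI'⟩ := hI.exists_insert hF h
    have hcard : #(univ \ insert w Q) + 1 = #(univ \ Q) := by
      rw [sdiff_insert, card_erase_add_one (mem_sdiff.mpr ⟨mem_univ w, hw⟩)]
    exact hF.sum_turn_eq_two_or_eq_neg_two hI' (card_pos.mp (by omega))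
termination_by #(univ \ Q)
decreasing_by omega

end FoldedLoop

theorem flat_folded_loop_convex_sub_reflex_eq_two (n : ℕ) [NeZero n]
    (p : ZMod n → ℝ) (lay : ZMod n → ℤ)
    (alt : ∀ i : ZMod n, (p (i + 1) - p i) * (p (i + 2) - p (i + 1)) < 0)
    (distinct : ∀ i j : ZMod n, i ≠ j →
      (Set.Ioo (min (p i) (p (i + 1))) (max (p i) (p (i + 1))) ∩
        Set.Ioo (min (p j) (p (j + 1))) (max (p j) (p (j + 1)))).Nonempty →
      lay i ≠ lay j)
    (noPenetrate : ∀ i j : ZMod n,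
      p i ∈ Set.Ioo (min (p j) (p (j + 1))) (max (p j) (p (j + 1))) →
      ¬ (min (lay (i - 1)) (lay i) < lay j ∧
         lay j < max (lay (i - 1)) (lay i)))
    (noCross : ∀ i j : ZMod n, i ≠ j → p i = p j →
      0 < (p (i + 1) - p i) * (p (j + 1) - p j) →
      ¬ Interleaved (lay (i - 1)) (lay i) (lay (j - 1)) (lay j)) :
    ((((univ : Finset (ZMod n)).filter fun i =>
        0 < (p i - p (i - 1)) * ((lay i : ℝ) - (lay (i - 1) : ℝ))).card : ℤ) -
      (((univ : Finset (ZMod n)).filter fun i =>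
        (p i - p (i - 1)) * ((lay i : ℝ) - (lay (i - 1) : ℝ)) < 0).card : ℤ) = 2) ∨
    ((((univ : Finset (ZMod n)).filter fun i =>
        0 < (p i - p (i - 1)) * ((lay i : ℝ) - (lay (i - 1) : ℝ))).card : ℤ) -
      (((univ : Finset (ZMod n)).filter fun i =>
        (p i - p (i - 1)) * ((lay i : ℝ) - (lay (i - 1) : ℝ)) < 0).card : ℤ) = -2) := by
  have hF : FoldedLoop.IsFlatFolding p lay := ⟨alt, distinct, noPenetrate, noCross⟩
  rw [← sum_sign_eq_card_sub_card]
  exact hF.sum_turn_eq_two_or_eq_neg_two FoldedLoop.sweepInvariant_empty (by simp)
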